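/- arXiv:0806.1906 — 5 statements merged into one kernel-verified Lean document; each statement's English description precedes it below -/
import Mathlib

section
/- The derivative of the function x ↦ x / cosh(βx)^2 is bounded in absolute value by 1 for all real x, provided 0 ≤ β ≤ 1. -/
/-- For `0 ≤ β ≤ 1`, the derivative of `x ↦ x / cosh (β x) ^ 2` is bounded in
absolute value by `1` for all real `x`. -/
theorem abs_deriv_div_cosh_sq_le_one (β : ℝ) (hβ0 : 0 ≤ β) (hβ1 : β ≤ 1) (x : ℝ) :
    |deriv (fun y : ℝ => y / Real.cosh (β * y) ^ 2) x| ≤ 1 := by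
  set t := β * x with ht
  set c := Real.cosh t with hcdef
  set s := Real.sinh t with hsdef
  have hcpos : 0 < c := Real.cosh_pos t
  have h1 : HasDerivAt (fun y : ℝ => Real.cosh (β * y)) (s * β) x := by
    have h := (Real.hasDerivAt_cosh (β * x)).comp x ((hasDerivAt_id x).const_mul β)
    simp only [mul_one] at h
    exact h
  have h2 : HasDerivAt (fun y : ℝ => Real.cosh (β * y) ^ 2)
      (2 * c ^ 1 * (s * β)) x := h1.pow 2
  have hd : HasDerivAt (fun y : ℝ => y / Real.cosh (β * y) ^ 2)
      ((1 * c ^ 2 - x * (2 * c ^ 1 * (s * β))) / (c ^ 2) ^ 2) x :=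
    (hasDerivAt_id x).div h2 (by positivity)
  rw [hd.deriv]
  have hts : t * s ≤ s ^ 2 := by
    rcases le_total 0 t with h | h
    · have hs : t ≤ s := Real.self_le_sinh_iff.mpr h
      have hs0 : 0 ≤ s := Real.sinh_nonneg_iff.mpr h
      nlinarith
    · have hs : s ≤ t := Real.sinh_le_self_iff.mpr h
      have hs0 : s ≤ 0 := Real.sinh_nonpos_iff.mpr h
      nlinarith
  have hts0 : 0 ≤ t * s := by
    rcases le_total 0 t with h | h
    · exact mul_nonneg h (Real.sinh_nonneg_iff.mpr h)
    · nlinarith [mul_nonneg (neg_nonneg.mpr h) (neg_nonneg.mpr (Real.sinh_nonpos_iff.mpr h))]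
  have hc2 : c ^ 2 = 1 + s ^ 2 := by
    rw [hcdef, hsdef, Real.cosh_sq]; ring
  have hc1 : 1 ≤ c := Real.one_le_cosh t
  have hxβ : x * s * β = t * s := by rw [ht]; ring
  rw [abs_le]
  have hc4 : (0:ℝ) < (c ^ 2) ^ 2 := by positivity
  constructor
  · rw [le_div_iff₀ hc4]
    nlinarith [sq_nonneg (c - 1), sq_nonneg s, mul_pos hcpos hcpos]
  · rw [div_le_one hc4]
    nlinarith [sq_nonneg s, mul_pos hcpos hcpos]
end

section
/- Let β = 1 + δ with δ > 0. Define g(x) = (tanh(βx) - x)/(1 - x·tanh(βx)) on [0,1). Then g has a unique root ζ in (0,1), g(x) > 0 for x in (0,ζ), and g(x) < 0 for x in (ζ,1). -/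
open Real Set Filter Topology

lemma tanh_hasDerivAt (x : ℝ) : HasDerivAt Real.tanh (1 / Real.cosh x ^ 2) x := by
  have h := (Real.hasDerivAt_sinh x).div (Real.hasDerivAt_cosh x) (Real.cosh_pos x).ne'
  have hx : Real.tanh = fun y => Real.sinh y / Real.cosh y := by
    funext y; exact Real.tanh_eq_sinh_div_cosh y
  rw [hx]
  refine h.congr_deriv ?_
  have := Real.cosh_sq_sub_sinh_sq x
  congr 1
  nlinarith

lemma tanh_lt_one' (x : ℝ) : Real.tanh x < 1 := by
  rw [Real.tanh_eq_sinh_div_cosh, div_lt_one (Real.cosh_pos x)]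
  exact Real.sinh_lt_cosh x

lemma tanh_nonneg' {x : ℝ} (hx : 0 ≤ x) : 0 ≤ Real.tanh x := by
  rw [Real.tanh_eq_sinh_div_cosh]
  exact div_nonneg (Real.sinh_nonneg_iff.2 hx) (Real.cosh_pos x).le

/-- Supercritical regime: for `β = 1 + δ` with `δ > 0`, the drift function
`g x = (tanh (β x) - x) / (1 - x * tanh (β x))` has a unique root `ζ` in `(0,1)`,
is positive on `(0,ζ)` and negative on `(ζ,1)`. -/
theorem drift_root_supercritical (δ : ℝ) (hδ : 0 < δ) :
    ∃ ζ ∈ Set.Ioo (0 : ℝ) 1,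
      (fun x : ℝ => (Real.tanh ((1 + δ) * x) - x) / (1 - x * Real.tanh ((1 + δ) * x))) ζ = 0 ∧
      (∀ x ∈ Set.Ioo (0 : ℝ) ζ,
        0 < (Real.tanh ((1 + δ) * x) - x) / (1 - x * Real.tanh ((1 + δ) * x))) ∧
      (∀ x ∈ Set.Ioo ζ (1 : ℝ),
        (Real.tanh ((1 + δ) * x) - x) / (1 - x * Real.tanh ((1 + δ) * x)) < 0) ∧
      (∀ x ∈ Set.Ioo (0 : ℝ) 1,
        (Real.tanh ((1 + δ) * x) - x) / (1 - x * Real.tanh ((1 + δ) * x)) = 0 → x = ζ) := by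
  set β := 1 + δ with hβ
  have hβ1 : 1 < β := by simp [hβ, hδ]
  have hβ0 : 0 < β := by linarith
  set φ : ℝ → ℝ := fun x => Real.tanh (β * x) - x with hφ
  -- derivative of φ
  have hderiv : ∀ x : ℝ, HasDerivAt φ (β / Real.cosh (β * x) ^ 2 - 1) x := by
    intro x
    have h1 : HasDerivAt (fun x : ℝ => Real.tanh (β * x)) (1 / Real.cosh (β * x) ^ 2 * β) x :=
      (tanh_hasDerivAt (β * x)).comp x (by simpa using (hasDerivAt_id x).const_mul β)
    have h2 := h1.sub (hasDerivAt_id x)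
    refine h2.congr_deriv ?_
    ring
  have hcont : Continuous φ := by
    have := fun x => (hderiv x).differentiableAt
    exact (Differentiable.continuous this)
  -- deriv φ
  have hderiv' : deriv φ = fun x => β / Real.cosh (β * x) ^ 2 - 1 := by
    funext x; exact (hderiv x).deriv
  -- strict concavity on Ici 0
  have hanti : StrictAntiOn (deriv φ) (interior (Ici (0:ℝ))) := by
    rw [interior_Ici, hderiv']
    intro a ha b hb hab
    simp only
    have hca : Real.cosh (β * a) < Real.cosh (β * b) := by
      apply Real.cosh_strictMonoOn
      · exact mem_Ici.2 (by nlinarith [mem_Ioi.1 ha])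
      · exact mem_Ici.2 (by nlinarith [mem_Ioi.1 hb])
      · nlinarith [mem_Ioi.1 ha]
    have h1 : (0:ℝ) < Real.cosh (β * a) := Real.cosh_pos _
    have h2 : Real.cosh (β * a) ^ 2 < Real.cosh (β * b) ^ 2 := by nlinarith
    have : β / Real.cosh (β * b) ^ 2 < β / Real.cosh (β * a) ^ 2 :=
      div_lt_div_of_pos_left hβ0 (by positivity) h2
    linarith
  have hconc : StrictConcaveOn ℝ (Ici (0:ℝ)) φ :=
    StrictAntiOn.strictConcaveOn_of_deriv (convex_Ici 0) hcont.continuousOn hanti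
  have hφ0 : φ 0 = 0 := by simp [hφ]
  -- find p ∈ (0,1) with φ p > 0 using derivative δ at 0
  have hd0 : HasDerivAt φ δ 0 := by
    have := hderiv 0
    simpa [hβ] using this
  have hslope : Tendsto (slope φ 0) (𝓝[≠] 0) (𝓝 δ) :=
    hasDerivAt_iff_tendsto_slope.1 hd0
  have hev : ∀ᶠ y in 𝓝[≠] (0:ℝ), 0 < slope φ 0 y :=
    hslope.eventually (eventually_gt_nhds hδ)
  have hev' : ∀ᶠ y in 𝓝[>] (0:ℝ), 0 < slope φ 0 y :=
    hev.filter_mono (nhdsWithin_mono 0 (fun y hy => ne_of_gt hy))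
  have hev2 : ∀ᶠ y in 𝓝[>] (0:ℝ), y < 1 :=
    eventually_nhdsWithin_of_eventually_nhds (eventually_lt_nhds one_pos)
  obtain ⟨p, hp1, hp2⟩ := (hev'.and (hev2.and self_mem_nhdsWithin)).exists
  obtain ⟨hplt1, hppos⟩ := hp2
  have hppos : (0:ℝ) < p := hppos
  have hφp : 0 < φ p := by
    have := hp1
    rw [slope_def_field] at this
    have : 0 < (φ p - φ 0) / (p - 0) := by simpa [div_eq_div_iff] using this
    rw [hφ0, sub_zero, sub_zero] at this
    exact (div_pos_iff.1 this).resolve_right (fun h => absurd hppos (not_lt.2 h.2.le)) |>.1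
  -- φ 1 < 0
  have hφ1 : φ 1 < 0 := by
    have := tanh_lt_one' (β * 1)
    simp only [hφ]
    linarith
  -- IVT
  have hivt : (0:ℝ) ∈ Ioo (φ 1) (φ p) := ⟨hφ1, hφp⟩
  obtain ⟨ζ, hζmem, hζ⟩ := intermediate_value_Ioo' hplt1.le hcont.continuousOn hivt
  have hζ01 : ζ ∈ Ioo (0:ℝ) 1 := ⟨lt_trans hppos hζmem.1, hζmem.2⟩
  -- sign of φ from strict concavity
  have hζpos := hζ01.1
  have hnum_pos : ∀ x ∈ Ioo (0:ℝ) ζ, 0 < φ x := by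
    intro x hx
    have hxζ : x / ζ ∈ Ioo (0:ℝ) 1 := ⟨div_pos hx.1 hζpos, (div_lt_one hζpos).2 hx.2⟩
    have := hconc.2 (mem_Ici.2 le_rfl) (mem_Ici.2 hζpos.le) (ne_of_lt hζpos)
      (show (0:ℝ) < 1 - x / ζ by linarith [hxζ.2]) (show (0:ℝ) < x / ζ from hxζ.1) (by ring)
    have hcomb : (1 - x / ζ) • (0:ℝ) + (x / ζ) • ζ = x := by
      rw [smul_zero, zero_add, smul_eq_mul, div_mul_cancel₀ x hζpos.ne']
    rw [hcomb, hφ0, hζ] at this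
    simpa using this
  have hnum_neg : ∀ x ∈ Ioo ζ (1:ℝ), φ x < 0 := by
    intro x hx
    have hxpos : (0:ℝ) < x := lt_trans hζpos hx.1
    have hζx : ζ / x ∈ Ioo (0:ℝ) 1 := ⟨div_pos hζpos hxpos, (div_lt_one hxpos).2 hx.1⟩
    have := hconc.2 (mem_Ici.2 le_rfl) (mem_Ici.2 hxpos.le) (ne_of_lt hxpos)
      (show (0:ℝ) < 1 - ζ / x by linarith [hζx.2]) (show (0:ℝ) < ζ / x from hζx.1) (by ring)
    have hcomb : (1 - ζ / x) • (0:ℝ) + (ζ / x) • x = ζ := by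
      rw [smul_zero, zero_add, smul_eq_mul, div_mul_cancel₀ ζ hxpos.ne']
    rw [hcomb, hφ0, hζ] at this
    simp only [smul_eq_mul, mul_zero, zero_add] at this
    by_contra hge
    push_neg at hge
    nlinarith [mul_nonneg hζx.1.le hge]
  -- denominator positive
  have hden : ∀ x ∈ Ioo (0:ℝ) 1, 0 < 1 - x * Real.tanh (β * x) := by
    intro x hx
    have h1 := tanh_lt_one' (β * x)
    have h2 := tanh_nonneg' (mul_pos hβ0 hx.1).le
    nlinarith [hx.1, hx.2]
  refine ⟨ζ, hζ01, ?_, ?_, ?_, ?_⟩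
  · simp only
    rw [div_eq_zero_iff]
    left
    exact hζ
  · intro x hx
    exact div_pos (hnum_pos x hx) (hden x ⟨hx.1, lt_trans hx.2 hζ01.2⟩)
  · intro x hx
    exact div_neg_of_neg_of_pos (hnum_neg x hx) (hden x ⟨lt_trans hζ01.1 hx.1, hx.2⟩)
  · intro x hx hg
    rcases div_eq_zero_iff.1 hg with h | h
    · by_contra hne
      rcases lt_or_gt_of_ne hne with hlt | hgt
      · exact absurd h (ne_of_gt (hnum_pos x ⟨hx.1, hlt⟩))
      · exact absurd h (ne_of_lt (hnum_neg x ⟨hgt, hx.2⟩))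
    · exact absurd h (ne_of_gt (hden x hx))
end

section
/- For β = 1 + δ with δ → 0 (i.e., for δ small), the unique positive root ζ of tanh(βx) = x satisfies ζ = √(3δ) + O(δ^{3/2}); more precisely, there exist constants C > 0 and δ₀ > 0 such that for all 0 < δ < δ₀, |ζ - √(3δ)| ≤ C·δ^{3/2}. -/
open Real

private lemma hasDerivAt_L (x : ℝ) (hx1 : x < 1) (hx0 : -1 < x) :
    HasDerivAt (fun y : ℝ => Real.log (1 + y) - Real.log (1 - y))
      ((1 + x)⁻¹ + (1 - x)⁻¹) x := by
  have h1 : (1 + x) ≠ 0 := by linarith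
  have h2 : (1 - x) ≠ 0 := by linarith
  have d1 : HasDerivAt (fun y : ℝ => Real.log (1 + y)) ((1 + x)⁻¹) x := by
    have := (Real.hasDerivAt_log h1).comp x ((hasDerivAt_id x).const_add 1)
    simpa [Function.comp_def] using this
  have d2 : HasDerivAt (fun y : ℝ => Real.log (1 - y)) (-(1 - x)⁻¹) x := by
    have h := (Real.hasDerivAt_log h2).comp x ((hasDerivAt_id x).neg.const_add 1)
    simpa [Function.comp_def] using h
  simpa [sub_neg_eq_add, Pi.sub_def] using d1.sub d2

private lemma L_lower (b : ℝ) (hb0 : 0 ≤ b) (hb1 : b < 1) :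
    2 * b + 2 * b ^ 3 / 3 ≤ Real.log (1 + b) - Real.log (1 - b) := by
  set g : ℝ → ℝ := fun x => Real.log (1 + x) - Real.log (1 - x) - (2 * x + 2 * x ^ 3 / 3)
    with hg_def
  have hder : ∀ x ∈ Set.Icc (0 : ℝ) b,
      HasDerivAt g ((1 + x)⁻¹ + (1 - x)⁻¹ - (2 + 2 * x ^ 2)) x := by
    intro x hx
    have hx1 : x < 1 := lt_of_le_of_lt hx.2 hb1
    have hx0 : (-1 : ℝ) < x := by linarith [hx.1]
    have d2 : HasDerivAt (fun x : ℝ => 2 * x + 2 * x ^ 3 / 3) (2 + 2 * x ^ 2) x := by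
      have h : HasDerivAt (fun x : ℝ => 2 * x + 2 * x ^ 3 / 3)
          (2 * 1 + 2 * (3 * x ^ 2) / 3) x := by
        exact ((hasDerivAt_id x).const_mul 2).add
          (((hasDerivAt_pow 3 x).const_mul 2).div_const 3)
      convert h using 1; ring
    exact (hasDerivAt_L x hx1 hx0).sub d2
  have hmono : MonotoneOn g (Set.Icc 0 b) := by
    apply monotoneOn_of_deriv_nonneg (convex_Icc 0 b)
    · exact fun x hx => (hder x hx).continuousAt.continuousWithinAt
    · intro x hx
      rw [interior_Icc] at hx
      exact (hder x ⟨hx.1.le, hx.2.le⟩).differentiableAt.differentiableWithinAt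
    · intro x hx
      rw [interior_Icc] at hx
      rw [(hder x ⟨hx.1.le, hx.2.le⟩).deriv]
      have hx1 : x < 1 := lt_of_lt_of_le hx.2 hb1.le
      have h1 : (0:ℝ) < 1 + x := by linarith [hx.1]
      have h2 : (0:ℝ) < 1 - x := by linarith
      have e : (1 + x)⁻¹ + (1 - x)⁻¹ - (2 + 2 * x ^ 2)
          = 2 * x ^ 4 / ((1 + x) * (1 - x)) := by
        field_simp
        ring
      rw [e]
      positivity
  have h0 : g 0 = 0 := by simp [hg_def]
  have := hmono (Set.left_mem_Icc.2 hb0) (Set.right_mem_Icc.2 hb0) hb0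
  rw [h0] at this
  simpa [hg_def, sub_nonneg] using this

private lemma L_upper (b : ℝ) (hb0 : 0 ≤ b) (hb1 : b ≤ 1 / 2) :
    Real.log (1 + b) - Real.log (1 - b) ≤ 2 * b + 2 * b ^ 3 / 3 + 2 * b ^ 5 := by
  set g : ℝ → ℝ := fun x => 2 * x + 2 * x ^ 3 / 3 + 2 * x ^ 5
      - (Real.log (1 + x) - Real.log (1 - x)) with hg_def
  have hder : ∀ x ∈ Set.Icc (0 : ℝ) b,
      HasDerivAt g (2 + 2 * x ^ 2 + 10 * x ^ 4 - ((1 + x)⁻¹ + (1 - x)⁻¹)) x := by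
    intro x hx
    have hx1 : x < 1 := by
      have := hx.2; linarith
    have hx0 : (-1 : ℝ) < x := by linarith [hx.1]
    have d2 : HasDerivAt (fun x : ℝ => 2 * x + 2 * x ^ 3 / 3 + 2 * x ^ 5)
        (2 + 2 * x ^ 2 + 10 * x ^ 4) x := by
      have h : HasDerivAt (fun x : ℝ => 2 * x + 2 * x ^ 3 / 3 + 2 * x ^ 5)
          (2 * 1 + 2 * (3 * x ^ 2) / 3 + 2 * (5 * x ^ 4)) x :=
        (((hasDerivAt_id x).const_mul 2).add
          (((hasDerivAt_pow 3 x).const_mul 2).div_const 3)).add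
          ((hasDerivAt_pow 5 x).const_mul 2)
      convert h using 1; ring
    exact d2.sub (hasDerivAt_L x hx1 hx0)
  have hmono : MonotoneOn g (Set.Icc 0 b) := by
    apply monotoneOn_of_deriv_nonneg (convex_Icc 0 b)
    · exact fun x hx => (hder x hx).continuousAt.continuousWithinAt
    · intro x hx
      rw [interior_Icc] at hx
      exact (hder x ⟨hx.1.le, hx.2.le⟩).differentiableAt.differentiableWithinAt
    · intro x hx
      rw [interior_Icc] at hx
      rw [(hder x ⟨hx.1.le, hx.2.le⟩).deriv]
      have hx2 : x ≤ 1 / 2 := le_trans hx.2.le hb1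
      have h1 : (0:ℝ) < 1 + x := by linarith [hx.1]
      have h2 : (0:ℝ) < 1 - x := by linarith
      have key : (1 + x)⁻¹ + (1 - x)⁻¹ ≤ 2 + 2 * x ^ 2 + 10 * x ^ 4 := by
        have e : (1 + x)⁻¹ + (1 - x)⁻¹ = 2 / ((1 + x) * (1 - x)) := by
          field_simp; ring
        rw [e, div_le_iff₀ (by nlinarith)]
        have hxsq : x ^ 2 ≤ 1 / 4 := by nlinarith [hx.1]
        nlinarith [mul_le_mul_of_nonneg_left hxsq (pow_nonneg hx.1.le 4)]
      linarith
  have h0 : g 0 = 0 := by simp [hg_def]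
  have := hmono (Set.left_mem_Icc.2 hb0) (Set.right_mem_Icc.2 hb0) hb0
  rw [h0] at this
  simpa [hg_def, sub_nonneg] using this

/-- For `β = 1 + δ` with `δ` small, the unique positive root `ζ` of `tanh (β x) = x`
satisfies `ζ = √(3δ) + O(δ^{3/2})`: there exist `C > 0` and `δ₀ > 0` such that for all
`0 < δ < δ₀`, every positive root `ζ` satisfies `|ζ - √(3δ)| ≤ C δ^{3/2}`. -/
theorem root_asymptotics_supercritical :
    ∃ C > (0 : ℝ), ∃ δ₀ > (0 : ℝ), ∀ δ : ℝ, 0 < δ → δ < δ₀ →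
      ∀ ζ : ℝ, 0 < ζ → Real.tanh ((1 + δ) * ζ) = ζ →
        |ζ - Real.sqrt (3 * δ)| ≤ C * δ ^ ((3 : ℝ) / 2) := by
  refine ⟨27, by norm_num, 1/12, by norm_num, ?_⟩
  intro δ hδ hδ12 ζ hζ heq
  set u := (1 + δ) * ζ with hu
  have hcosh : 0 < Real.cosh u := Real.cosh_pos u
  have hζ1 : ζ < 1 := by
    rw [← heq, Real.tanh_eq_sinh_div_cosh, div_lt_one hcosh]
    exact Real.sinh_lt_cosh u
  have hzpos1 : 0 < 1 - ζ := by linarith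
  have hzpos2 : 0 < 1 + ζ := by linarith
  have hsinh : Real.sinh u = ζ * Real.cosh u := by
    rw [Real.tanh_eq_sinh_div_cosh] at heq
    field_simp at heq
    linarith
  have hexp : Real.exp u * (1 - ζ) = Real.exp (-u) * (1 + ζ) := by
    rw [Real.sinh_eq, Real.cosh_eq] at hsinh
    linear_combination 2 * hsinh
  have hexp2 : Real.exp (2 * u) = (1 + ζ) / (1 - ζ) := by
    rw [eq_div_iff hzpos1.ne', show (2:ℝ) * u = u + u by ring, Real.exp_add]
    calc Real.exp u * Real.exp u * (1 - ζ)
        = Real.exp u * (Real.exp u * (1 - ζ)) := by ring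
      _ = Real.exp u * (Real.exp (-u) * (1 + ζ)) := by rw [hexp]
      _ = Real.exp u * Real.exp (-u) * (1 + ζ) := by ring
      _ = 1 + ζ := by rw [← Real.exp_add]; simp
  have hlog : 2 * u = Real.log (1 + ζ) - Real.log (1 - ζ) := by
    rw [← Real.log_exp (2 * u), hexp2, Real.log_div hzpos2.ne' hzpos1.ne']
  have hlow := L_lower ζ hζ.le hζ1
  rw [← hlog] at hlow
  have hζsq : ζ ^ 2 ≤ 3 * δ := by nlinarith [hlow, hζ]
  have hζhalf : ζ ≤ 1 / 2 := by nlinarith [hζsq]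
  have hupp := L_upper ζ hζ.le hζhalf
  rw [← hlog] at hupp
  have h3 : 3 * δ - ζ ^ 2 ≤ 3 * ζ ^ 4 := by nlinarith [hupp, hζ]
  have hζ4 : ζ ^ 4 ≤ 9 * δ ^ 2 := by nlinarith [hζsq, sq_nonneg ζ]
  have h3δ : (0:ℝ) ≤ 3 * δ := by linarith
  have hs : Real.sqrt (3 * δ) ^ 2 = 3 * δ := Real.sq_sqrt h3δ
  set s := Real.sqrt (3 * δ) with hs_def
  have hspos : 0 < s := Real.sqrt_pos.2 (by linarith)
  have hζle : ζ ≤ s := (Real.le_sqrt hζ.le h3δ).2 hζsq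
  have hsqδ : Real.sqrt δ ≤ s := Real.sqrt_le_sqrt (by linarith)
  have hδs : Real.sqrt δ * Real.sqrt δ = δ := Real.mul_self_sqrt hδ.le
  have hsqδpos : 0 < Real.sqrt δ := Real.sqrt_pos.2 hδ
  have hmul : (s - ζ) * s ≤ 27 * (δ * Real.sqrt δ) * s := by
    have e1 : (s - ζ) * s ≤ (s - ζ) * (s + ζ) :=
      mul_le_mul_of_nonneg_left (by linarith) (by linarith)
    have e2 : (s - ζ) * (s + ζ) = 3 * δ - ζ ^ 2 := by
      have : (s - ζ) * (s + ζ) = s ^ 2 - ζ ^ 2 := by ring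
      rw [this, hs]
    have e3 : (27:ℝ) * δ ^ 2 = 27 * (δ * Real.sqrt δ) * Real.sqrt δ := by
      linear_combination (-27 * δ) * hδs
    have e4 : 27 * (δ * Real.sqrt δ) * Real.sqrt δ ≤ 27 * (δ * Real.sqrt δ) * s := by
      have hpos : (0:ℝ) ≤ 27 * (δ * Real.sqrt δ) := by positivity
      exact mul_le_mul_of_nonneg_left hsqδ hpos
    linarith [e1, e2.le, h3, hζ4]
  have hfinal : s - ζ ≤ 27 * (δ * Real.sqrt δ) :=
    le_of_mul_le_mul_right (by linarith [hmul]) hspos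
  have hrw : δ ^ ((3:ℝ) / 2) = δ * Real.sqrt δ := by
    rw [show (3:ℝ)/2 = 1 + 1/2 by norm_num, Real.rpow_add hδ, Real.rpow_one,
      ← Real.sqrt_eq_rpow]
  rw [hrw, abs_of_nonpos (by linarith)]
  linarith
end

section
/- Let a_t (t ≥ 0) be a sequence of nonnegative reals satisfying a_{t+1} ≤ a_t - (δ/n)a_t - a_t³/(5n) for all t, with a_0 ≤ 1, where δ > 0 and n ≥ 1. Then for t ≥ (n/(2δ))log(δ²n) + 3n/δ, we have a_t ≤ 1/√(δn), provided δ²n is sufficiently large. -/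
lemma cube_poly_aux (u N s : ℝ) (hu1 : u ≤ 1) (hN : 5 ≤ N)
    (h : u * s ≤ N) (hu0 : 0 ≤ u) (hs : N ≤ s) : u * (N - u)^2 * (s + 2) ≤ N^3 := by
  nlinarith [mul_nonneg hu0 (sub_nonneg.2 h), mul_nonneg (mul_nonneg hu0 hu0) (sub_nonneg.2 h),
    sq_nonneg (N - u), mul_nonneg (sub_nonneg.2 h) (sq_nonneg (N-u)),
    mul_nonneg (sub_nonneg.2 hu1) (sub_nonneg.2 hs), sq_nonneg (N - u*s),
    mul_nonneg hu0 (sub_nonneg.2 hs)]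

lemma cube_step_aux (x y n t : ℝ) (hx0 : 0 ≤ x) (hx1 : x ≤ 1) (hy0 : 0 ≤ y)
    (hn : 1 ≤ n) (ht : 0 ≤ t)
    (hy : y ≤ x - x^3/(5*n))
    (ih : x^2 * (5*n + 2*t) ≤ 5*n) :
    y^2 * (5*n + 2*t + 2) ≤ 5*n := by
  have h5 : (0:ℝ) < 5*n := by linarith
  have hc0 : 0 ≤ x - x^3/(5*n) := by
    rw [sub_nonneg, div_le_iff₀ (by linarith)]
    nlinarith
  have hy2 : y^2 ≤ (x - x^3/(5*n))^2 := by nlinarith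
  have poly : x^2 * (5*n - x^2)^2 * ((5*n+2*t) + 2) ≤ (5*n)^3 :=
    cube_poly_aux (x^2) (5*n) (5*n+2*t) (by nlinarith) (by linarith)
      ih (by positivity) (by linarith)
  have key : (x - x^3/(5*n))^2 * (5*n + 2*t + 2) ≤ 5*n := by
    rw [show x - x^3/(5*n) = (x*(5*n - x^2))/(5*n) by field_simp]
    rw [div_pow, div_mul_eq_mul_div, div_le_iff₀ (by positivity)]
    nlinarith [poly]
  calc y^2 * (5*n + 2*t + 2) ≤ (x - x^3/(5*n))^2 * (5*n + 2*t + 2) :=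
        mul_le_mul_of_nonneg_right hy2 (by linarith)
    _ ≤ 5*n := key

set_option maxHeartbeats 1000000 in
/-- Deterministic decay recursion for the subcritical magnetization: if a nonnegative
sequence satisfies `a_{t+1} ≤ a_t - (δ/n) a_t - a_t³/(5n)` with `a₀ ≤ 1`, then for all
`t ≥ (n/(2δ)) log(δ²n) + 3n/δ` one has `a_t ≤ 1/√(δn)`, provided `δ²n` is large enough. -/
theorem decay_recursion_bound :
    ∃ M : ℝ, ∀ (n δ : ℝ) (a : ℕ → ℝ), 0 < δ → 1 ≤ n → M ≤ δ ^ 2 * n →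
      (∀ t, 0 ≤ a t) → (∀ t, a (t + 1) ≤ a t - (δ / n) * a t - (a t) ^ 3 / (5 * n)) →
      a 0 ≤ 1 →
      ∀ t : ℕ, (n / (2 * δ)) * Real.log (δ ^ 2 * n) + 3 * n / δ ≤ (t : ℝ) →
        a t ≤ 1 / Real.sqrt (δ * n) := by
  refine ⟨1, ?_⟩
  intro n δ a hδ hn hM ha hrec ha0 t ht
  have hn0 : (0:ℝ) < n := lt_of_lt_of_le one_pos hn
  have hδn : (0:ℝ) < δ * n := mul_pos hδ hn0
  have hsX : (0:ℝ) < Real.sqrt (δ * n) := Real.sqrt_pos.2 hδn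
  set L := Real.log (δ ^ 2 * n) with hLdef
  have hL0 : 0 ≤ L := Real.log_nonneg hM
  have hdn0 : 0 ≤ δ / n := div_nonneg hδ.le hn0.le
  -- monotonicity
  have hstep : ∀ s, a (s+1) ≤ a s := by
    intro s
    have h := hrec s
    have h1 : 0 ≤ δ / n * a s := mul_nonneg hdn0 (ha s)
    have h2 : 0 ≤ a s ^ 3 / (5 * n) := div_nonneg (pow_nonneg (ha s) 3) (by linarith)
    linarith
  have hmono : ∀ s u : ℕ, s ≤ u → a u ≤ a s := fun s u h =>
    antitone_nat_of_succ_le hstep h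
  have hle1 : ∀ s, a s ≤ 1 := fun s => le_trans (hmono 0 s (Nat.zero_le _)) ha0
  -- key exp-sqrt identity
  have hsqrt_exp : Real.sqrt (δ ^ 2 * n) = Real.exp (L / 2) := by
    rw [← Real.exp_log (Real.sqrt_pos.2 (by positivity : (0:ℝ) < δ^2*n)),
      Real.log_sqrt (by positivity)]
  have hsplit : Real.sqrt (δ ^ 2 * n) = Real.sqrt δ * Real.sqrt (δ * n) := by
    rw [← Real.sqrt_mul hδ.le]; ring_nf
  have hsδ : (0:ℝ) < Real.sqrt δ := Real.sqrt_pos.2 hδ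
  rcases le_or_gt δ n with hδle | hδle
  · -- δ ≤ n : linear decay available
    have hq : 0 ≤ 1 - δ / n := by
      rw [sub_nonneg, div_le_one hn0]; exact hδle
    have hlin : ∀ s k : ℕ, a (s + k) ≤ a s * (1 - δ/n)^k := by
      intro s k
      induction k with
      | zero => simp
      | succ k ih =>
        have h1 : a (s + k + 1) ≤ a (s + k) * (1 - δ/n) := by
          have h := hrec (s + k)
          have h2 : 0 ≤ a (s+k) ^ 3 / (5 * n) := div_nonneg (pow_nonneg (ha (s+k)) 3) (by linarith)
          nlinarith
        calc a (s + (k+1)) = a (s + k + 1) := by ring_nf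
          _ ≤ a (s + k) * (1 - δ/n) := h1
          _ ≤ (a s * (1 - δ/n)^k) * (1 - δ/n) := mul_le_mul_of_nonneg_right ih hq
          _ = a s * (1 - δ/n)^(k+1) := by ring
    have hexp : ∀ s k : ℕ, a (s + k) ≤ a s * Real.exp ((k:ℝ) * -(δ/n)) := by
      intro s k
      refine le_trans (hlin s k) (mul_le_mul_of_nonneg_left ?_ (ha s))
      rw [Real.exp_nat_mul]
      refine pow_le_pow_left₀ hq ?_ k
      have := Real.add_one_le_exp (-(δ/n))
      linarith
    rcases le_or_gt δ (1/2) with hhalf | hhalf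
    · -- small δ : two phases
      set t₁ : ℕ := ⌈5*n/(2*δ)⌉₊ with ht1def
      have h2δ : (0:ℝ) < 2*δ := by linarith
      have hT1a : 5*n/(2*δ) ≤ (t₁:ℝ) := Nat.le_ceil _
      have hT1b : (t₁:ℝ) ≤ 5*n/(2*δ) + 1 := (Nat.ceil_lt_add_one (by positivity)).le
      have heq3 : 3*n/δ = 5*n/(2*δ) + n/(2*δ) := by field_simp; ring
      have h1n : (1:ℝ) ≤ n/(2*δ) := by
        rw [le_div_iff₀ h2δ]; linarith
      have ht1r : (t₁:ℝ) ≤ 3*n/δ := by rw [heq3]; linarith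
      have hTnn : 0 ≤ n / (2*δ) * L := mul_nonneg (by positivity) hL0
      have ht1t : t₁ ≤ t := by
        have : (t₁:ℝ) ≤ (t:ℝ) := by linarith
        exact_mod_cast this
      -- cubic phase bound
      have hcube : ∀ s : ℕ, (a s)^2 * (5*n + 2*(s:ℝ)) ≤ 5*n := by
        intro s
        induction s with
        | zero =>
          have h01 : a 0 * a 0 ≤ 1 * 1 := mul_le_mul ha0 ha0 (ha 0) zero_le_one
          push_cast
          nlinarith [h01]
        | succ s ih =>
          have h3 : a (s+1) ≤ a s - (a s)^3/(5*n) := by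
            have h := hrec s
            have h1 : 0 ≤ δ / n * a s := mul_nonneg hdn0 (ha s)
            linarith
          have := cube_step_aux (a s) (a (s+1)) n (s:ℝ) (ha s) (hle1 s) (ha (s+1))
            hn (by positivity) h3 ih
          push_cast
          linarith
      have hat1 : a t₁ ≤ Real.sqrt δ := by
        have hc := hcube t₁
        have h2t : 5*n/δ ≤ 5*n + 2*(t₁:ℝ) := by
          have : 5*n/δ = 2 * (5*n/(2*δ)) := by field_simp
          nlinarith
        have hsq : (a t₁)^2 ≤ δ := by
          have h0 : (0:ℝ) < 5*n/δ := by positivity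
          have h1 : (a t₁)^2 * (5*n/δ) ≤ 5*n :=
            le_trans (mul_le_mul_of_nonneg_left h2t (sq_nonneg _)) hc
          have h2 : δ * (5*n/δ) = 5*n := by field_simp
          by_contra hcon
          push_neg at hcon
          have h3 : δ * (5*n/δ) < (a t₁)^2 * (5*n/δ) :=
            mul_lt_mul_of_pos_right hcon h0
          rw [h2] at h3
          linarith
        have := Real.sqrt_le_sqrt hsq
        rwa [Real.sqrt_sq (ha t₁)] at this
      have hdecomp : t₁ + (t - t₁) = t := Nat.add_sub_cancel' ht1t
      have hcast : ((t - t₁ : ℕ):ℝ) = (t:ℝ) - (t₁:ℝ) := by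
        rw [Nat.cast_sub ht1t]
      have hb : a t ≤ Real.sqrt δ * Real.exp (((t:ℝ) - t₁) * -(δ/n)) := by
        have h := hexp t₁ (t - t₁)
        rw [hdecomp, hcast] at h
        exact le_trans h (mul_le_mul_of_nonneg_right hat1 (Real.exp_nonneg _))
      have harg : ((t:ℝ) - t₁) * -(δ/n) ≤ -(L/2) := by
        have h1 : n/(2*δ) * L ≤ (t:ℝ) - t₁ := by
          have : n/(2*δ) * L + 3*n/δ ≤ (t:ℝ) := by
            have : n / (2 * δ) * L = n / (2 * δ) * Real.log (δ ^ 2 * n) := rfl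
            linarith [ht]
          linarith
        have h2 : (δ/n) * (n/(2*δ) * L) = L/2 := by field_simp
        have h3 : (δ/n) * (n/(2*δ) * L) ≤ (δ/n) * ((t:ℝ) - t₁) :=
          mul_le_mul_of_nonneg_left h1 hdn0
        rw [h2] at h3
        nlinarith
      have hfin : Real.sqrt δ * Real.exp (((t:ℝ) - t₁) * -(δ/n)) ≤ 1 / Real.sqrt (δ*n) := by
        have h1 : Real.exp (((t:ℝ) - t₁) * -(δ/n)) ≤ Real.exp (-(L/2)) :=
          Real.exp_le_exp.2 harg
        have h2 : Real.exp (-(L/2)) = 1 / (Real.sqrt δ * Real.sqrt (δ*n)) := by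
          rw [← hsplit, hsqrt_exp, Real.exp_neg]
          rw [one_div]
        have h3 : Real.sqrt δ * Real.exp (-(L/2)) = 1 / Real.sqrt (δ*n) := by
          rw [h2]; field_simp
        calc Real.sqrt δ * Real.exp (((t:ℝ) - t₁) * -(δ/n))
            ≤ Real.sqrt δ * Real.exp (-(L/2)) := mul_le_mul_of_nonneg_left h1 hsδ.le
          _ = 1 / Real.sqrt (δ*n) := h3
      exact le_trans hb hfin
    · -- 1/2 < δ ≤ n : linear decay alone suffices
      have hb : a t ≤ Real.exp ((t:ℝ) * -(δ/n)) := by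
        have h := hexp 0 t
        simp only [Nat.zero_add] at h
        calc a t ≤ a 0 * Real.exp ((t:ℝ) * -(δ/n)) := h
          _ ≤ 1 * Real.exp ((t:ℝ) * -(δ/n)) :=
            mul_le_mul_of_nonneg_right ha0 (Real.exp_nonneg _)
          _ = Real.exp ((t:ℝ) * -(δ/n)) := one_mul _
      have harg : (t:ℝ) * -(δ/n) ≤ -(L/2) - 3 := by
        have h2 : (δ/n) * (n/(2*δ) * L + 3*n/δ) = L/2 + 3 := by field_simp
        have h3 : (δ/n) * (n/(2*δ) * L + 3*n/δ) ≤ (δ/n) * (t:ℝ) :=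
          mul_le_mul_of_nonneg_left ht hdn0
        rw [h2] at h3
        nlinarith
      have hhalfsqrt : (1:ℝ)/2 ≤ Real.sqrt δ := by
        have h4 : ((1:ℝ)/2)^2 ≤ δ := by nlinarith
        have := Real.sqrt_le_sqrt h4
        rwa [Real.sqrt_sq (by norm_num : (0:ℝ) ≤ 1/2)] at this
      have hexp3 : Real.exp (-(3:ℝ)) ≤ 1/2 := by
        have h1 : (4:ℝ) ≤ Real.exp 3 := by
          have := Real.add_one_le_exp (3:ℝ); linarith
        rw [Real.exp_neg]
        rw [inv_le_comm₀ (by positivity) (by norm_num)]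
        linarith
      have hfin : Real.exp ((t:ℝ) * -(δ/n)) ≤ 1 / Real.sqrt (δ*n) := by
        have h1 : Real.exp ((t:ℝ) * -(δ/n)) ≤ Real.exp (-(L/2) - 3) :=
          Real.exp_le_exp.2 harg
        have h2 : Real.exp (-(L/2) - 3) = Real.exp (-(3:ℝ)) * Real.exp (-(L/2)) := by
          rw [← Real.exp_add]; ring_nf
        have h3 : Real.exp (-(L/2)) = 1 / (Real.sqrt δ * Real.sqrt (δ*n)) := by
          rw [← hsplit, hsqrt_exp, Real.exp_neg, one_div]
        have h5 : Real.exp (-(3:ℝ)) ≤ Real.sqrt δ := le_trans hexp3 hhalfsqrt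
        have h4 : Real.exp (-(3:ℝ)) * Real.exp (-(L/2)) ≤ 1 / Real.sqrt (δ*n) := by
          rw [h3]
          calc Real.exp (-(3:ℝ)) * (1 / (Real.sqrt δ * Real.sqrt (δ*n)))
              ≤ Real.sqrt δ * (1 / (Real.sqrt δ * Real.sqrt (δ*n))) :=
                mul_le_mul_of_nonneg_right h5 (by positivity)
            _ = 1 / Real.sqrt (δ*n) := by field_simp
        linarith
      exact le_trans hb hfin
  · -- n < δ : sequence dies immediately
    have ha1 : a 1 ≤ 0 := by
      have h := hrec 0
      have h1 : 0 ≤ a 0 ^ 3 / (5 * n) := div_nonneg (pow_nonneg (ha 0) 3) (by linarith)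
      have h2 : (1:ℝ) < δ / n := (one_lt_div hn0).2 (by linarith)
      nlinarith [ha 0]
    have htpos : 1 ≤ t := by
      rcases Nat.eq_zero_or_pos t with h | h
      · exfalso
        rw [h] at ht
        push_cast at ht
        have hTnn : 0 ≤ n / (2*δ) * L := mul_nonneg (by positivity) hL0
        have : 0 < 3*n/δ := by positivity
        have hLeq : n / (2 * δ) * Real.log (δ ^ 2 * n) = n / (2*δ) * L := rfl
        linarith
      · exact h
    have : a t ≤ 0 := le_trans (hmono 1 t htpos) ha1
    exact le_trans this (by positivity)
end

section
/- For the Glauber dynamics of the Curie-Weiss model on n vertices, consider the sum-of-spins function h(σ) = Σᵢ σ(i). Its Dirichlet form satisfies E(h) ≤ 2, and if all pairs of spins are nonnegatively correlated under the stationary measure μ_n then Var_{μ_n}(h) ≥ n; consequently the spectral gap satisfies 1 - λ₁ ≤ 2/n. -/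
noncomputable section

namespace CurieWeiss

variable (n : ℕ) (β : ℝ)

/-- The ±1 value of a Boolean spin. -/
def val (b : Bool) : ℝ := if b then 1 else -1

/-- Unnormalized Gibbs weight `exp((β/n) Σ_{i<j} σ(i)σ(j))`. -/
def weight (σ : Fin n → Bool) : ℝ :=
  Real.exp ((β / n) *
    ∑ i : Fin n, ∑ j : Fin n, if (i : ℕ) < (j : ℕ) then val (σ i) * val (σ j) else 0)

/-- The Curie-Weiss Gibbs measure `μ_n`. -/
def gibbs (σ : Fin n → Bool) : ℝ := weight n β σ / ∑ σ' : Fin n → Bool, weight n β σ'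

/-- Heat-bath probability of updating site `i` to spin `+1`. -/
def pplus (σ : Fin n → Bool) (i : Fin n) : ℝ :=
  (1 + Real.tanh (β * ((∑ j : Fin n, val (σ j)) - val (σ i)) / n)) / 2

/-- The transition matrix of the heat-bath Glauber dynamics: pick a uniform site and
resample its spin from the conditional Gibbs distribution. -/
def glauber (σ σ' : Fin n → Bool) : ℝ :=
  (1 / n) * ∑ i : Fin n,
    ((if σ' = Function.update σ i true then pplus n β σ i else 0)
      + (if σ' = Function.update σ i false then 1 - pplus n β σ i else 0))

/-- The sum-of-spins function `h(σ) = Σᵢ σ(i)`. -/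
def sumSpins (σ : Fin n → Bool) : ℝ := ∑ i : Fin n, val (σ i)

/-- The Dirichlet form of `h` for the Glauber dynamics. -/
def dirichlet : ℝ :=
  (1 / 2) * ∑ σ : Fin n → Bool, ∑ σ' : Fin n → Bool,
    (sumSpins n σ - sumSpins n σ') ^ 2 * gibbs n β σ * glauber n β σ σ'

/-- The mean of `h` under the Gibbs measure. -/
def meanSum : ℝ := ∑ σ : Fin n → Bool, sumSpins n σ * gibbs n β σ

/-- The variance of `h` under the Gibbs measure. -/
def varSum : ℝ := ∑ σ : Fin n → Bool, (sumSpins n σ - meanSum n β) ^ 2 * gibbs n β σ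

/-- The mean of the spin at site `i` under the Gibbs measure. -/
def meanSpin (i : Fin n) : ℝ := ∑ σ : Fin n → Bool, val (σ i) * gibbs n β σ

/-- The covariance of the spins at sites `i` and `j` under the Gibbs measure. -/
def cov (i j : Fin n) : ℝ :=
  (∑ σ : Fin n → Bool, val (σ i) * val (σ j) * gibbs n β σ) - meanSpin n β i * meanSpin n β j

end CurieWeiss

end

noncomputable section
namespace CWP
open CurieWeiss Finset Matrix

variable (n : ℕ) (β : ℝ)

abbrev S (n : ℕ) := Fin n → Bool

lemma val_mul_self (b : Bool) : val b * val b = 1 := by cases b <;> simp [CurieWeiss.val]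

lemma val_abs (b : Bool) : |val b| = 1 := by cases b <;> simp [CurieWeiss.val]

lemma weight_pos (σ : S n) : 0 < weight n β σ := Real.exp_pos _

lemma Z_pos : 0 < ∑ σ : S n, weight n β σ :=
  Finset.sum_pos (fun σ _ => weight_pos n β σ) univ_nonempty

lemma gibbs_pos (σ : S n) : 0 < gibbs n β σ := div_pos (weight_pos n β σ) (Z_pos n β)

lemma gibbs_nonneg (σ : S n) : 0 ≤ gibbs n β σ := (gibbs_pos n β σ).le

lemma sum_gibbs : ∑ σ : S n, gibbs n β σ = 1 := by
  unfold CurieWeiss.gibbs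
  rw [← Finset.sum_div]
  exact div_self (Z_pos n β).ne'

lemma tanh_lt_one (x : ℝ) : Real.tanh x < 1 := by
  rw [Real.tanh_eq_sinh_div_cosh, div_lt_one (Real.cosh_pos x), Real.sinh_eq, Real.cosh_eq]
  have := Real.exp_pos (-x); linarith

lemma neg_one_lt_tanh (x : ℝ) : -1 < Real.tanh x := by
  rw [Real.tanh_eq_sinh_div_cosh, lt_div_iff₀ (Real.cosh_pos x), Real.sinh_eq, Real.cosh_eq]
  have := Real.exp_pos x; linarith

lemma pplus_pos (σ : S n) (i : Fin n) : 0 < pplus n β σ i := by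
  have := neg_one_lt_tanh (β * ((∑ j : Fin n, val (σ j)) - val (σ i)) / n)
  unfold pplus; linarith

lemma pplus_lt_one (σ : S n) (i : Fin n) : pplus n β σ i < 1 := by
  have := tanh_lt_one (β * ((∑ j : Fin n, val (σ j)) - val (σ i)) / n)
  unfold pplus; linarith

lemma glauber_nonneg (σ σ' : S n) : 0 ≤ glauber n β σ σ' := by
  apply mul_nonneg (by positivity)
  apply Finset.sum_nonneg
  intro i _
  have h1 := (pplus_pos n β σ i).le
  have h2 := (pplus_lt_one n β σ i).le
  split_ifs <;> linarith

lemma glauber_row_sum (hn : 1 ≤ n) (σ : S n) : ∑ σ' : S n, glauber n β σ σ' = 1 := by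
  unfold CurieWeiss.glauber
  rw [← Finset.mul_sum, Finset.sum_comm]
  have : ∀ i : Fin n, (∑ σ' : S n,
      ((if σ' = Function.update σ i true then pplus n β σ i else 0)
      + (if σ' = Function.update σ i false then 1 - pplus n β σ i else 0))) = 1 := by
    intro i
    rw [Finset.sum_add_distrib, Finset.sum_ite_eq' _ _ (fun _ => pplus n β σ i),
      Finset.sum_ite_eq' _ _ (fun _ => 1 - pplus n β σ i)]
    simp
  rw [Finset.sum_congr rfl (fun i _ => this i)]
  simp only [Finset.sum_const, Finset.card_univ, Fintype.card_fin, nsmul_eq_mul, mul_one]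
  have hne : (n:ℝ) ≠ 0 := by positivity
  field_simp

lemma sumSpins_update (σ : S n) (i : Fin n) (b : Bool) :
    sumSpins n (Function.update σ i b) = sumSpins n σ - val (σ i) + val b := by
  unfold CurieWeiss.sumSpins
  have : ∀ j : Fin n, val (Function.update σ i b j) - val (σ j)
      = if j = i then val b - val (σ i) else 0 := by
    intro j
    by_cases h : j = i
    · subst h; simp
    · simp [Function.update_of_ne h, h]
  have h2 : ∑ j : Fin n, (val (Function.update σ i b j) - val (σ j)) = val b - val (σ i) := by
    rw [Finset.sum_congr rfl (fun j _ => this j), Finset.sum_ite_eq' Finset.univ i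
      (fun _ => val b - val (σ i))]
    simp
  rw [Finset.sum_sub_distrib] at h2
  linarith

lemma glauber_ne_zero_exists (σ σ' : S n) (h : glauber n β σ σ' ≠ 0) :
    ∃ (i : Fin n) (b : Bool), σ' = Function.update σ i b := by
  by_contra hc
  push_neg at hc
  apply h
  unfold CurieWeiss.glauber
  rw [Finset.sum_eq_zero, mul_zero]
  intro i _
  rw [if_neg (hc i true), if_neg (hc i false), add_zero]

lemma diff_sq_le (σ σ' : S n) (h : glauber n β σ σ' ≠ 0) :
    (sumSpins n σ - sumSpins n σ') ^ 2 ≤ 4 := by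
  obtain ⟨i, b, rfl⟩ := glauber_ne_zero_exists n β σ _ h
  rw [sumSpins_update]
  have h1 := val_abs (σ i); have h2 := val_abs b
  have : |val (σ i)| ≤ 1 := le_of_eq h1
  have : |val b| ≤ 1 := le_of_eq h2
  rw [abs_le] at *
  nlinarith [this.1, this.2]

lemma dirichlet_le_two (hn : 1 ≤ n) : dirichlet n β ≤ 2 := by
  unfold CurieWeiss.dirichlet
  have hb : ∀ σ σ' : S n, (sumSpins n σ - sumSpins n σ') ^ 2 * gibbs n β σ * glauber n β σ σ'
      ≤ 4 * gibbs n β σ * glauber n β σ σ' := by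
    intro σ σ'
    by_cases h : glauber n β σ σ' = 0
    · rw [h]; simp
    · have := diff_sq_le n β σ σ' h
      have h1 := gibbs_nonneg n β σ
      have h2 := glauber_nonneg n β σ σ'
      exact mul_le_mul_of_nonneg_right (mul_le_mul_of_nonneg_right this h1) h2
  have : ∑ σ : S n, ∑ σ' : S n,
      (sumSpins n σ - sumSpins n σ') ^ 2 * gibbs n β σ * glauber n β σ σ'
      ≤ ∑ σ : S n, ∑ σ' : S n, 4 * gibbs n β σ * glauber n β σ σ' :=
    Finset.sum_le_sum fun σ _ => Finset.sum_le_sum fun σ' _ => hb σ σ'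
  have h4 : ∑ σ : S n, ∑ σ' : S n, 4 * gibbs n β σ * glauber n β σ σ' = 4 := by
    have : ∀ σ : S n, ∑ σ' : S n, 4 * gibbs n β σ * glauber n β σ σ'
        = 4 * gibbs n β σ := by
      intro σ
      rw [← Finset.mul_sum, glauber_row_sum n β hn σ, mul_one]
    rw [Finset.sum_congr rfl (fun σ _ => this σ), ← Finset.mul_sum, sum_gibbs, mul_one]
  linarith

def flip (σ : S n) : S n := fun j => !(σ j)

lemma val_not (b : Bool) : val (!b) = -val b := by cases b <;> simp [CurieWeiss.val]

lemma weight_flip (σ : S n) : weight n β (flip n σ) = weight n β σ := by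
  unfold CurieWeiss.weight
  congr 1
  congr 1
  apply Finset.sum_congr rfl; intro i _
  apply Finset.sum_congr rfl; intro j _
  by_cases h : (i:ℕ) < (j:ℕ) <;> simp [h, flip, val_not]

def flipEquiv : Equiv (S n) (S n) :=
  ⟨flip n, flip n, fun σ => by funext j; simp [flip], fun σ => by funext j; simp [flip]⟩

lemma gibbs_flip (σ : S n) : gibbs n β (flip n σ) = gibbs n β σ := by
  unfold CurieWeiss.gibbs
  rw [weight_flip]

lemma meanSpin_zero (i : Fin n) : meanSpin n β i = 0 := by
  have h : meanSpin n β i = -meanSpin n β i := by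
    unfold CurieWeiss.meanSpin
    nth_rewrite 1 [← Fintype.sum_equiv (flipEquiv n) _
      (fun σ => val (σ i) * gibbs n β σ) (fun σ => rfl)]
    rw [← Finset.sum_neg_distrib]
    apply Finset.sum_congr rfl
    intro σ _
    show val (!(σ i)) * gibbs n β (flip n σ) = -(val (σ i) * gibbs n β σ)
    rw [val_not, gibbs_flip]; ring
  linarith

lemma meanSum_eq : meanSum n β = ∑ i : Fin n, meanSpin n β i := by
  unfold CurieWeiss.meanSum CurieWeiss.meanSpin CurieWeiss.sumSpins
  rw [Finset.sum_comm]
  apply Finset.sum_congr rfl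
  intro σ _
  rw [Finset.sum_mul]

lemma meanSum_zero : meanSum n β = 0 := by
  rw [meanSum_eq]
  simp [meanSpin_zero]

lemma cov_eq (i j : Fin n) :
    cov n β i j = ∑ σ : S n, val (σ i) * val (σ j) * gibbs n β σ := by
  unfold CurieWeiss.cov
  rw [meanSpin_zero]; ring

lemma varSum_ge (hcov : ∀ i j : Fin n, 0 ≤ cov n β i j) : (n : ℝ) ≤ varSum n β := by
  have hvar : varSum n β = ∑ i : Fin n, ∑ j : Fin n, cov n β i j := by
    unfold CurieWeiss.varSum
    rw [meanSum_zero]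
    have : ∀ σ : S n, (sumSpins n σ - 0) ^ 2 * gibbs n β σ
        = ∑ i : Fin n, ∑ j : Fin n, val (σ i) * val (σ j) * gibbs n β σ := by
      intro σ
      rw [sub_zero, sq]
      unfold CurieWeiss.sumSpins
      rw [Finset.sum_mul_sum, Finset.sum_mul]
      apply Finset.sum_congr rfl; intro i _
      rw [Finset.sum_mul]
    rw [Finset.sum_congr rfl (fun σ _ => this σ), Finset.sum_comm]
    apply Finset.sum_congr rfl; intro i _
    rw [Finset.sum_comm]
    apply Finset.sum_congr rfl; intro j _
    rw [cov_eq]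
  rw [hvar]
  have hdiag : ∀ i : Fin n, cov n β i i = 1 := by
    intro i
    rw [cov_eq]
    have : ∀ σ : S n, val (σ i) * val (σ i) * gibbs n β σ = gibbs n β σ := by
      intro σ; rw [val_mul_self, one_mul]
    rw [Finset.sum_congr rfl (fun σ _ => this σ), sum_gibbs]
  have hle : ∀ i : Fin n, (1:ℝ) ≤ ∑ j : Fin n, cov n β i j := by
    intro i
    calc (1:ℝ) = cov n β i i := (hdiag i).symm
    _ ≤ ∑ j : Fin n, cov n β i j :=
      Finset.single_le_sum (fun j _ => hcov i j) (Finset.mem_univ i)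
  calc (n:ℝ) = ∑ _i : Fin n, (1:ℝ) := by simp
  _ ≤ _ := Finset.sum_le_sum (fun i _ => hle i)

def Q (σ : S n) : ℝ :=
  ∑ i : Fin n, ∑ j : Fin n, if (i : ℕ) < (j : ℕ) then val (σ i) * val (σ j) else 0

lemma weight_eq (σ : S n) : weight n β σ = Real.exp ((β / n) * Q n σ) := rfl

lemma Qdiff (σ : S n) (i : Fin n) :
    Q n (Function.update σ i true) - Q n (Function.update σ i false)
      = 2 * ∑ j ∈ Finset.univ.erase i, val (σ j) := by
  classical
  set a : Fin n → ℝ := fun j => val (Function.update σ i true j) with ha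
  set b : Fin n → ℝ := fun j => val (Function.update σ i false j) with hb
  have hai : a i = 1 := by simp [ha, CurieWeiss.val]
  have hbi : b i = -1 := by simp [hb, CurieWeiss.val]
  have hab : ∀ j, j ≠ i → a j = val (σ j) ∧ b j = val (σ j) := by
    intro j hj
    constructor <;> simp [ha, hb, Function.update_of_ne hj]
  set g : Fin n → Fin n → ℝ := fun k l =>
    (if (k:ℕ) < (l:ℕ) then a k * a l else 0) - (if (k:ℕ) < (l:ℕ) then b k * b l else 0)
    with hg
  have hsum : Q n (Function.update σ i true) - Q n (Function.update σ i false)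
      = ∑ k : Fin n, ∑ l : Fin n, g k l := by
    unfold CWP.Q
    rw [← Finset.sum_sub_distrib]
    apply Finset.sum_congr rfl; intro k _
    rw [← Finset.sum_sub_distrib]
  rw [hsum]
  have hzero : ∀ k l, k ≠ i → l ≠ i → g k l = 0 := by
    intro k l hk hl
    simp only [hg, (hab k hk).1, (hab k hk).2, (hab l hl).1, (hab l hl).2, sub_self]
  have hgii : g i i = 0 := by simp [hg]
  have key : ∀ j, j ≠ i → g j i + g i j = 2 * val (σ j) := by
    intro j hj
    have hne : (j:ℕ) ≠ (i:ℕ) := fun h => hj (Fin.ext h)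
    rcases lt_or_gt_of_ne hne with h | h
    · simp only [hg, if_pos h, if_neg (not_lt.2 h.le), hai, hbi, (hab j hj).1, (hab j hj).2]
      ring
    · simp only [hg, if_neg (not_lt.2 h.le), if_pos h, hai, hbi, (hab j hj).1, (hab j hj).2]
      ring
  have hsplit : ∀ k : Fin n, (∑ l : Fin n, g k l)
      = g k i + ∑ l ∈ Finset.univ.erase i, g k l := by
    intro k
    rw [← Finset.add_sum_erase _ _ (Finset.mem_univ i)]
  rw [Finset.sum_congr rfl (fun k _ => hsplit k), Finset.sum_add_distrib]
  have h1 : ∑ k : Fin n, g k i = ∑ k ∈ Finset.univ.erase i, g k i := by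
    rw [← Finset.add_sum_erase _ (fun k => g k i) (Finset.mem_univ i), hgii, zero_add]
  have h2 : ∑ k : Fin n, ∑ l ∈ Finset.univ.erase i, g k l
      = ∑ l ∈ Finset.univ.erase i, g i l := by
    rw [← Finset.add_sum_erase _ _ (Finset.mem_univ i)]
    have : ∑ k ∈ Finset.univ.erase i, ∑ l ∈ Finset.univ.erase i, g k l = 0 := by
      apply Finset.sum_eq_zero; intro k hk
      apply Finset.sum_eq_zero; intro l hl
      exact hzero k l (Finset.ne_of_mem_erase hk) (Finset.ne_of_mem_erase hl)
    rw [this, add_zero]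
  rw [h1, h2, ← Finset.sum_add_distrib, Finset.mul_sum]
  apply Finset.sum_congr rfl
  intro j hj
  exact key j (Finset.ne_of_mem_erase hj)

lemma weight_ratio (σ : S n) (i : Fin n) :
    weight n β (Function.update σ i true)
        * Real.exp (-(β * (∑ j ∈ Finset.univ.erase i, val (σ j)) / n))
      = weight n β (Function.update σ i false)
        * Real.exp (β * (∑ j ∈ Finset.univ.erase i, val (σ j)) / n) := by
  rw [weight_eq, weight_eq, ← Real.exp_add, ← Real.exp_add]
  congr 1
  have hQ := Qdiff n σ i
  have h : Q n (Function.update σ i true)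
      = Q n (Function.update σ i false) + 2 * ∑ j ∈ Finset.univ.erase i, val (σ j) := by
    linarith
  rw [h]; ring

lemma tanh_id (x : ℝ) :
    (1 + Real.tanh x) * Real.exp (-x) = (1 - Real.tanh x) * Real.exp x := by
  have hc : Real.cosh x ≠ 0 := (Real.cosh_pos x).ne'
  rw [Real.tanh_eq_sinh_div_cosh]
  have hu : Real.exp x ≠ 0 := Real.exp_ne_zero x
  field_simp
  rw [Real.sinh_eq, Real.cosh_eq]
  ring

lemma pplus_update (σ : S n) (i : Fin n) (b : Bool) :
    pplus n β (Function.update σ i b) i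
      = (1 + Real.tanh (β * (∑ j ∈ Finset.univ.erase i, val (σ j)) / n)) / 2 := by
  have h1 : ∑ j : Fin n, val (Function.update σ i b j)
      = (∑ j : Fin n, val (σ j)) - val (σ i) + val b := sumSpins_update n σ i b
  have h2 : ∑ j : Fin n, val (σ j) = val (σ i) + ∑ j ∈ Finset.univ.erase i, val (σ j) :=
    (Finset.add_sum_erase _ _ (Finset.mem_univ i)).symm
  unfold CurieWeiss.pplus
  rw [Function.update_self, h1]
  congr 2
  rw [h2]; ring

lemma db_key (σ : S n) (i : Fin n) :
    weight n β (Function.update σ i false) * pplus n β (Function.update σ i false) i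
      = weight n β (Function.update σ i true)
        * (1 - pplus n β (Function.update σ i true) i) := by
  set x : ℝ := β * (∑ j ∈ Finset.univ.erase i, val (σ j)) / n with hx
  rw [pplus_update, pplus_update, ← hx]
  have h1 : weight n β (Function.update σ i true) * Real.exp (-x)
      = weight n β (Function.update σ i false) * Real.exp x := weight_ratio n β σ i
  have h2 := tanh_id x
  set t := Real.tanh x
  set wm := weight n β (Function.update σ i false)
  set wp := weight n β (Function.update σ i true)
  have key : wm * (1 + t) = wp * (1 - t) := by
    refine mul_right_cancel₀ (Real.exp_ne_zero (-x)) ?_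
    linear_combination wm * h2 - (1 - t) * h1
  linarith

lemma db_term (σ σ' : S n) (i : Fin n) :
    weight n β σ * ((if σ' = Function.update σ i true then pplus n β σ i else 0)
      + (if σ' = Function.update σ i false then 1 - pplus n β σ i else 0))
    = weight n β σ' * ((if σ = Function.update σ' i true then pplus n β σ' i else 0)
      + (if σ = Function.update σ' i false then 1 - pplus n β σ' i else 0)) := by
  by_cases hag : ∀ j, j ≠ i → σ' j = σ j
  · by_cases hv : σ' i = σ i
    · have hss : σ' = σ := funext fun j => by
        by_cases hj : j = i
        · subst hj; exact hv
        · exact hag j hj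
      subst hss; rfl
    · cases hσi : σ i with
      | false =>
        have hσ'i : σ' i = true := by
          cases h' : σ' i
          · exact absurd (h'.trans hσi.symm) hv
          · rfl
        have h1 : σ' = Function.update σ i true := Function.eq_update_iff.2 ⟨hσ'i, hag⟩
        have h2 : σ = Function.update σ i false := by
          rw [← hσi]; exact (Function.update_eq_self i σ).symm
        have hA : σ' ≠ Function.update σ i false := fun h => by
          have := congrFun h i; rw [Function.update_self, hσ'i] at this; exact Bool.noConfusion this
        have hB : σ ≠ Function.update σ' i true := fun h => by
          have := congrFun h i; rw [Function.update_self, hσi] at this; exact Bool.noConfusion this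
        have hC : σ = Function.update σ' i false :=
          Function.eq_update_iff.2 ⟨hσi, fun j hj => (hag j hj).symm⟩
        rw [if_pos h1, if_neg hA, if_neg hB, if_pos hC, add_zero, zero_add]
        have key := db_key n β σ i
        rw [← h2, ← h1] at key
        exact key
      | true =>
        have hσ'i : σ' i = false := by
          cases h' : σ' i
          · rfl
          · exact absurd (h'.trans hσi.symm) hv
        have h1 : σ' = Function.update σ i false := Function.eq_update_iff.2 ⟨hσ'i, hag⟩
        have h2 : σ = Function.update σ' i true :=
          Function.eq_update_iff.2 ⟨hσi, fun j hj => (hag j hj).symm⟩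
        have hA : σ' ≠ Function.update σ i true := fun h => by
          have := congrFun h i; rw [Function.update_self, hσ'i] at this; exact Bool.noConfusion this
        have hB : σ ≠ Function.update σ' i false := fun h => by
          have := congrFun h i; rw [Function.update_self, hσi] at this; exact Bool.noConfusion this
        have h3 : σ' = Function.update σ' i false := by
          rw [← hσ'i]; exact (Function.update_eq_self i σ').symm
        rw [if_neg hA, if_pos h1, if_pos h2, if_neg hB, add_zero, zero_add]
        have key := db_key n β σ' i
        rw [← h3, ← h2] at key
        exact key.symm
  · push_neg at hag
    have hA : ∀ b, σ' ≠ Function.update σ i b := by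
      rintro b rfl
      obtain ⟨j, hj, hne⟩ := hag
      exact hne (Function.update_of_ne hj _ _)
    have hB : ∀ b, σ ≠ Function.update σ' i b := by
      rintro b h
      obtain ⟨j, hj, hne⟩ := hag
      apply hne
      rw [h, Function.update_of_ne hj]
    rw [if_neg (hA true), if_neg (hA false), if_neg (hB true), if_neg (hB false)]
    simp

lemma reversible (σ σ' : S n) :
    gibbs n β σ * glauber n β σ σ' = gibbs n β σ' * glauber n β σ' σ := by
  have hsum : weight n β σ * ∑ i : Fin n,
      ((if σ' = Function.update σ i true then pplus n β σ i else 0)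
        + (if σ' = Function.update σ i false then 1 - pplus n β σ i else 0))
      = weight n β σ' * ∑ i : Fin n,
      ((if σ = Function.update σ' i true then pplus n β σ' i else 0)
        + (if σ = Function.update σ' i false then 1 - pplus n β σ' i else 0)) := by
    rw [Finset.mul_sum, Finset.mul_sum]
    exact Finset.sum_congr rfl fun i _ => db_term n β σ σ' i
  unfold CurieWeiss.gibbs CurieWeiss.glauber
  linear_combination (1 / ((∑ σ'' : S n, weight n β σ'') * n)) * hsum

lemma stationary (hn : 1 ≤ n) (τ : S n) :
    ∑ σ : S n, gibbs n β σ * glauber n β σ τ = gibbs n β τ := by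
  have : ∀ σ : S n, gibbs n β σ * glauber n β σ τ = gibbs n β τ * glauber n β τ σ :=
    fun σ => reversible n β σ τ
  rw [Finset.sum_congr rfl (fun σ _ => this σ), ← Finset.mul_sum,
    glauber_row_sum n β hn τ, mul_one]

lemma term_nonneg (σ σ' : S n) (i : Fin n) :
    0 ≤ (if σ' = Function.update σ i true then pplus n β σ i else 0)
      + (if σ' = Function.update σ i false then 1 - pplus n β σ i else 0) := by
  have h1 := pplus_pos n β σ i
  have h2 := pplus_lt_one n β σ i
  split_ifs <;> linarith

lemma glauber_pos_nb (hn : 1 ≤ n) (σ : S n) (i : Fin n) (b : Bool) :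
    0 < glauber n β σ (Function.update σ i b) := by
  have hne : Function.update σ i true ≠ Function.update σ i false := fun h => by
    have := congrFun h i; simp at this
  have h1 := pplus_pos n β σ i
  have h2 := pplus_lt_one n β σ i
  have hterm : 0 < (if Function.update σ i b = Function.update σ i true then pplus n β σ i else 0)
      + (if Function.update σ i b = Function.update σ i false then 1 - pplus n β σ i else 0) := by
    cases b
    · rw [if_neg (fun h => hne h.symm), if_pos rfl]; linarith
    · rw [if_pos rfl, if_neg hne]; linarith
  have hsum : (if Function.update σ i b = Function.update σ i true then pplus n β σ i else 0)
      + (if Function.update σ i b = Function.update σ i false then 1 - pplus n β σ i else 0)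
      ≤ ∑ i' : Fin n, ((if Function.update σ i b = Function.update σ i' true then pplus n β σ i' else 0)
      + (if Function.update σ i b = Function.update σ i' false then 1 - pplus n β σ i' else 0)) :=
    Finset.single_le_sum (fun i' _ => term_nonneg n β σ _ i') (Finset.mem_univ i)
  unfold CurieWeiss.glauber
  have hn0 : (0:ℝ) < 1 / n := by
    have : (0:ℝ) < n := by exact_mod_cast hn
    positivity
  exact mul_pos hn0 (lt_of_lt_of_le hterm hsum)

lemma Pfix_const (hn : 1 ≤ n) (f : S n → ℝ)
    (hf : ∀ σ : S n, ∑ σ' : S n, glauber n β σ σ' * f σ' = f σ) (σ τ : S n) : f σ = f τ := by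
  classical
  obtain ⟨σ₀, -, hmax⟩ := Finset.exists_max_image Finset.univ f ⟨σ, Finset.mem_univ σ⟩
  set M := f σ₀ with hM
  have step : ∀ ρ : S n, f ρ = M → ∀ (i : Fin n) (b : Bool), f (Function.update ρ i b) = M := by
    intro ρ hρ i b
    have hsum0 : ∑ σ' : S n, glauber n β ρ σ' * (M - f σ') = 0 := by
      have hsplit : ∑ σ' : S n, glauber n β ρ σ' * (M - f σ')
          = (∑ σ' : S n, glauber n β ρ σ' * M) - ∑ σ' : S n, glauber n β ρ σ' * f σ' := by
        rw [← Finset.sum_sub_distrib]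
        apply Finset.sum_congr rfl; intro σ' _; ring
      rw [hsplit, ← Finset.sum_mul, glauber_row_sum n β hn ρ, one_mul, hf ρ, hρ, sub_self]
    have hzero := (Finset.sum_eq_zero_iff_of_nonneg (fun σ' _ =>
      mul_nonneg (glauber_nonneg n β ρ σ')
        (sub_nonneg.2 (hmax σ' (Finset.mem_univ σ'))))).1 hsum0
    have h := hzero (Function.update ρ i b) (Finset.mem_univ _)
    have hp := glauber_pos_nb n β hn ρ i b
    rcases mul_eq_zero.1 h with h' | h'
    · exact absurd h' hp.ne'
    · linarith
  have main : ∀ (k : ℕ) (ρ : S n),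
      (Finset.univ.filter (fun j => ρ j ≠ σ₀ j)).card ≤ k → f ρ = M := by
    intro k
    induction k with
    | zero =>
      intro ρ hc
      have hall : ∀ j, ρ j = σ₀ j := by
        intro j
        by_contra hj
        have hmem : j ∈ Finset.univ.filter (fun j => ρ j ≠ σ₀ j) := by
          simp [hj]
        have := Finset.card_pos.2 ⟨j, hmem⟩
        omega
      rw [funext hall]
    | succ k ih =>
      intro ρ hc
      rcases Nat.eq_zero_or_pos (Finset.univ.filter (fun j => ρ j ≠ σ₀ j)).card with hz | hz
      · exact ih ρ (by omega)
      · obtain ⟨i, hi⟩ := Finset.card_pos.1 hz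
        have hii : ρ i ≠ σ₀ i := (Finset.mem_filter.1 hi).2
        set ρ' := Function.update ρ i (σ₀ i) with hρ'def
        have hsub : Finset.univ.filter (fun j => ρ' j ≠ σ₀ j)
            ⊆ (Finset.univ.filter (fun j => ρ j ≠ σ₀ j)).erase i := by
          intro j hj
          have hj' := (Finset.mem_filter.1 hj).2
          have hji : j ≠ i := by
            rintro rfl
            exact hj' (by simp [hρ'def])
          rw [Finset.mem_erase]
          refine ⟨hji, Finset.mem_filter.2 ⟨Finset.mem_univ j, ?_⟩⟩
          rwa [hρ'def, Function.update_of_ne hji] at hj'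
        have hcard : (Finset.univ.filter (fun j => ρ' j ≠ σ₀ j)).card ≤ k := by
          have h1 := Finset.card_le_card hsub
          have h2 := Finset.card_erase_of_mem hi
          omega
        have hρ' := ih ρ' hcard
        have hρeq : ρ = Function.update ρ' i (ρ i) := by
          funext j
          by_cases hj : j = i
          · subst hj; simp
          · simp [Function.update_of_ne hj, hρ'def]
        rw [hρeq]
        exact step ρ' hρ' i (ρ i)
  have h1 : f σ = M := main _ σ le_rfl
  have h2 : f τ = M := main _ τ le_rfl
  rw [h1, h2]

def dd (σ : S n) : ℝ := Real.sqrt (gibbs n β σ)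

lemma dd_pos (σ : S n) : 0 < dd n β σ := Real.sqrt_pos.2 (gibbs_pos n β σ)

lemma dd_sq (σ : S n) : dd n β σ * dd n β σ = gibbs n β σ :=
  Real.mul_self_sqrt (gibbs_nonneg n β σ)

def Amat : Matrix (S n) (S n) ℝ :=
  Matrix.of fun σ σ' => glauber n β σ σ' * dd n β σ / dd n β σ'

lemma Amat_symm (σ σ' : S n) : Amat n β σ σ' = Amat n β σ' σ := by
  unfold CWP.Amat
  simp only [Matrix.of_apply]
  have hrev := reversible n β σ σ'
  have h1 := (dd_pos n β σ).ne'
  have h2 := (dd_pos n β σ').ne'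
  have e1 : gibbs n β σ = dd n β σ * dd n β σ := (dd_sq n β σ).symm
  have e2 : gibbs n β σ' = dd n β σ' * dd n β σ' := (dd_sq n β σ').symm
  rw [e1, e2] at hrev
  field_simp
  nlinarith [hrev]

lemma Amat_herm : (Amat n β).IsHermitian := by
  rw [Matrix.IsHermitian]
  ext σ σ'
  rw [Matrix.conjTranspose_apply]
  simp only [star_trivial]
  exact Amat_symm n β σ' σ

lemma Amat_mulVec_dd (hn : 1 ≤ n) :
    (Amat n β) *ᵥ (dd n β) = dd n β := by
  funext σ
  simp only [Matrix.mulVec, dotProduct, CWP.Amat, Matrix.of_apply]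
  have : ∀ σ' : S n, glauber n β σ σ' * dd n β σ / dd n β σ' * dd n β σ'
      = dd n β σ * glauber n β σ σ' := by
    intro σ'
    field_simp [(dd_pos n β σ').ne']
  rw [Finset.sum_congr rfl (fun σ' _ => this σ'), ← Finset.mul_sum,
    glauber_row_sum n β hn σ, mul_one]

lemma eig_transfer (θ : ℝ) (v : S n → ℝ) (hv : v ≠ 0)
    (hA : (Amat n β) *ᵥ v = θ • v) :
    Module.End.HasEigenvalue (Matrix.toLin' (Matrix.of (glauber n β))) θ := by
  classical
  set u : S n → ℝ := fun σ => v σ / dd n β σ with hu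
  have hune : u ≠ 0 := by
    intro h
    apply hv
    funext σ
    have : u σ = 0 := congrFun h σ
    rw [hu] at this
    simp only at this
    rcases div_eq_zero_iff.1 this with h' | h'
    · exact h'
    · exact absurd h' (dd_pos n β σ).ne'
  have hPu : Matrix.toLin' (Matrix.of (glauber n β)) u = θ • u := by
    funext σ
    have hAσ : ∑ σ' : S n, Amat n β σ σ' * v σ' = θ * v σ := by
      have := congrFun hA σ
      simpa [Matrix.mulVec, dotProduct] using this
    have : ∑ σ' : S n, glauber n β σ σ' * u σ'
        = (∑ σ' : S n, Amat n β σ σ' * v σ') / dd n β σ := by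
      rw [Finset.sum_div]
      apply Finset.sum_congr rfl
      intro σ' _
      rw [hu]
      simp only [CWP.Amat, Matrix.of_apply]
      field_simp [(dd_pos n β σ).ne', (dd_pos n β σ').ne']
    show (Matrix.of (glauber n β)).mulVec u σ = (θ • u) σ
    simp only [Matrix.mulVec, dotProduct, Matrix.of_apply, Pi.smul_apply, smul_eq_mul]
    rw [this, hAσ, hu]
    simp only
    ring
  exact Module.End.hasEigenvalue_of_hasEigenvector
    ⟨Module.End.mem_eigenspace_iff.2 hPu, hune⟩

def Eterm : ℝ := ∑ σ : S n, ∑ σ' : S n,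
  gibbs n β σ * glauber n β σ σ' * sumSpins n σ * sumSpins n σ'

lemma varSum_eq' : varSum n β = ∑ σ : S n, sumSpins n σ ^ 2 * gibbs n β σ := by
  unfold CurieWeiss.varSum
  rw [meanSum_zero]
  simp

lemma dirichlet_eq (hn : 1 ≤ n) : dirichlet n β = varSum n β - Eterm n β := by
  unfold CurieWeiss.dirichlet
  have expand : ∀ σ σ' : S n,
      (sumSpins n σ - sumSpins n σ') ^ 2 * gibbs n β σ * glauber n β σ σ'
      = sumSpins n σ ^ 2 * (gibbs n β σ * glauber n β σ σ')
        - 2 * (gibbs n β σ * glauber n β σ σ' * sumSpins n σ * sumSpins n σ')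
        + sumSpins n σ' ^ 2 * (gibbs n β σ * glauber n β σ σ') := by
    intro σ σ'; ring
  have hsum : ∑ σ : S n, ∑ σ' : S n,
      (sumSpins n σ - sumSpins n σ') ^ 2 * gibbs n β σ * glauber n β σ σ'
      = (∑ σ : S n, ∑ σ' : S n, sumSpins n σ ^ 2 * (gibbs n β σ * glauber n β σ σ'))
        - 2 * Eterm n β
        + ∑ σ : S n, ∑ σ' : S n, sumSpins n σ' ^ 2 * (gibbs n β σ * glauber n β σ σ') := by
    unfold CWP.Eterm
    rw [Finset.mul_sum]
    rw [← Finset.sum_sub_distrib, ← Finset.sum_add_distrib]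
    apply Finset.sum_congr rfl; intro σ _
    rw [Finset.mul_sum]
    rw [← Finset.sum_sub_distrib, ← Finset.sum_add_distrib]
    apply Finset.sum_congr rfl; intro σ' _
    rw [expand σ σ']
  have h1 : ∑ σ : S n, ∑ σ' : S n, sumSpins n σ ^ 2 * (gibbs n β σ * glauber n β σ σ')
      = varSum n β := by
    rw [varSum_eq']
    apply Finset.sum_congr rfl; intro σ _
    rw [← Finset.mul_sum, ← Finset.mul_sum, glauber_row_sum n β hn σ, mul_one]
  have h2 : ∑ σ : S n, ∑ σ' : S n, sumSpins n σ' ^ 2 * (gibbs n β σ * glauber n β σ σ')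
      = varSum n β := by
    rw [Finset.sum_comm, varSum_eq']
    apply Finset.sum_congr rfl; intro σ' _
    rw [← Finset.mul_sum, stationary n β hn σ']
  rw [hsum, h1, h2]
  ring

lemma Amat_eig_one_const (hn : 1 ≤ n) (v : S n → ℝ) (hAv : Amat n β *ᵥ v = v) :
    ∃ c : ℝ, ∀ σ : S n, v σ = c * dd n β σ := by
  classical
  set u : S n → ℝ := fun σ => v σ / dd n β σ with hu
  have hPu : ∀ σ : S n, ∑ σ' : S n, glauber n β σ σ' * u σ' = u σ := by
    intro σ
    have hAσ : ∑ σ' : S n, Amat n β σ σ' * v σ' = v σ := by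
      have := congrFun hAv σ
      simpa [Matrix.mulVec, dotProduct] using this
    have hstep : ∑ σ' : S n, glauber n β σ σ' * u σ'
        = (∑ σ' : S n, Amat n β σ σ' * v σ') / dd n β σ := by
      rw [Finset.sum_div]
      apply Finset.sum_congr rfl
      intro σ' _
      rw [hu]
      simp only [CWP.Amat, Matrix.of_apply]
      field_simp [(dd_pos n β σ).ne', (dd_pos n β σ').ne']
    rw [hstep, hAσ]
  have hconst := Pfix_const n β hn u hPu
  refine ⟨u (fun _ => true), fun σ => ?_⟩
  have h1 : u σ = u (fun _ => true) := hconst σ _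
  have h2 : v σ = u σ * dd n β σ := by
    rw [hu]; field_simp [(dd_pos n β σ).ne']
  rw [h2, h1]

lemma Eterm_le (hn : 1 ≤ n) (lam₁ : ℝ)
    (hmax : ∀ θ : ℝ, Module.End.HasEigenvalue (Matrix.toLin' (Matrix.of (glauber n β))) θ →
      θ ≠ 1 → θ ≤ lam₁) :
    Eterm n β ≤ lam₁ * varSum n β := by
  classical
  have hT : (Matrix.toEuclideanLin (Amat n β)).IsSymmetric :=
    Matrix.isHermitian_iff_isSymmetric.1 (Amat_herm n β)
  set T := Matrix.toEuclideanLin (Amat n β) with hT_def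
  have hfr : Module.finrank ℝ (EuclideanSpace ℝ (S n)) = Fintype.card (S n) :=
    finrank_euclideanSpace
  set b := hT.eigenvectorBasis hfr with hb_def
  set ev := hT.eigenvalues hfr with hev_def
  set g : EuclideanSpace ℝ (S n) :=
    (WithLp.equiv 2 ((S n) → ℝ)).symm (fun σ => dd n β σ * sumSpins n σ) with hg_def
  set w : EuclideanSpace ℝ (S n) := (WithLp.equiv 2 ((S n) → ℝ)).symm (dd n β) with hw_def
  have hg_apply : ∀ σ : S n, g σ = dd n β σ * sumSpins n σ := fun σ => rfl
  have hw_apply : ∀ σ : S n, w σ = dd n β σ := fun σ => rfl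
  have hinner : ∀ x y : EuclideanSpace ℝ (S n), (inner ℝ x y : ℝ) = ∑ σ : S n, x σ * y σ := by
    intro x y
    rw [PiLp.inner_apply]
    simp [RCLike.inner_apply]
    exact Finset.sum_congr rfl fun _ _ => mul_comm _ _
  have hgg : (inner ℝ g g : ℝ) = varSum n β := by
    rw [hinner, varSum_eq']
    apply Finset.sum_congr rfl
    intro σ _
    rw [hg_apply]
    linear_combination (sumSpins n σ)^2 * dd_sq n β σ
  have hTg_apply : ∀ (x : EuclideanSpace ℝ (S n)) (σ : S n),
      (T x) σ = ∑ σ' : S n, Amat n β σ σ' * x σ' := fun x σ => rfl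
  have hgTg : (inner ℝ g (T g) : ℝ) = Eterm n β := by
    rw [hinner]
    unfold CWP.Eterm
    apply Finset.sum_congr rfl
    intro σ _
    rw [hTg_apply, Finset.mul_sum]
    apply Finset.sum_congr rfl
    intro σ' _
    rw [hg_apply, hg_apply]
    have e : Amat n β σ σ' * (dd n β σ' * sumSpins n σ')
        = glauber n β σ σ' * dd n β σ * sumSpins n σ' := by
      simp only [CWP.Amat, Matrix.of_apply]
      field_simp [(dd_pos n β σ').ne']
    rw [e]
    linear_combination (glauber n β σ σ' * sumSpins n σ * sumSpins n σ') * dd_sq n β σ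
  have hgw : (inner ℝ g w : ℝ) = 0 := by
    rw [hinner]
    have : ∀ σ : S n, g σ * w σ = sumSpins n σ * gibbs n β σ := by
      intro σ
      rw [hg_apply, hw_apply]
      linear_combination sumSpins n σ * dd_sq n β σ
    rw [Finset.sum_congr rfl (fun σ _ => this σ)]
    exact meanSum_zero n β
  -- eigenvector equations as mulVec
  have hmv : ∀ i, Amat n β *ᵥ (WithLp.equiv 2 ((S n) → ℝ) (b i))
      = ev i • (WithLp.equiv 2 ((S n) → ℝ) (b i)) := by
    intro i
    have heig := hT.apply_eigenvectorBasis hfr i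
    rw [← hb_def, ← hev_def] at heig
    have := congrArg (⇑(WithLp.equiv 2 ((S n) → ℝ))) heig
    simp at this
    exact this
  have hbound : ∀ i, ev i * ((inner ℝ g (b i) : ℝ) * (inner ℝ (b i) g : ℝ))
      ≤ lam₁ * ((inner ℝ g (b i) : ℝ) * (inner ℝ (b i) g : ℝ)) := by
    intro i
    by_cases hev1 : ev i = 1
    · have hone : Amat n β *ᵥ (WithLp.equiv 2 ((S n) → ℝ) (b i))
          = (WithLp.equiv 2 ((S n) → ℝ) (b i)) := by
        rw [hmv i, hev1, one_smul]
      obtain ⟨c, hc⟩ := Amat_eig_one_const n β hn _ hone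
      have hz : (inner ℝ g (b i) : ℝ) = 0 := by
        rw [hinner]
        have : ∀ σ : S n, g σ * (b i) σ = c * (g σ * w σ) := by
          intro σ
          have : (b i) σ = c * dd n β σ := hc σ
          rw [this, hw_apply]; ring
        rw [Finset.sum_congr rfl (fun σ _ => this σ), ← Finset.mul_sum]
        have := hgw
        rw [hinner] at this
        rw [this, mul_zero]
      rw [hz]; simp
    · have hv_ne : (WithLp.equiv 2 ((S n) → ℝ) (b i)) ≠ 0 := by
        intro h
        have hb_ne : b i ≠ 0 := by
          have := b.toBasis.ne_zero i
          simpa using this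
        apply hb_ne
        apply (WithLp.equiv 2 ((S n) → ℝ)).injective
        simp [h]
      have heigP := eig_transfer n β (ev i) _ hv_ne (hmv i)
      have hle := hmax (ev i) heigP hev1
      have hsq : 0 ≤ (inner ℝ g (b i) : ℝ) * (inner ℝ (b i) g : ℝ) := by
        rw [real_inner_comm (b i) g]
        exact mul_self_nonneg _
      exact mul_le_mul_of_nonneg_right hle hsq
  have hexp1 : (inner ℝ g (T g) : ℝ) = ∑ i, ev i * ((inner ℝ g (b i) : ℝ) * (inner ℝ (b i) g : ℝ)) := by
    rw [← b.sum_inner_mul_inner g (T g)]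
    apply Finset.sum_congr rfl
    intro i _
    have h1 : (inner ℝ (b i) (T g) : ℝ) = (inner ℝ (T (b i)) g : ℝ) := (hT (b i) g).symm
    have h2 : T (b i) = ev i • b i := by
      have := hT.apply_eigenvectorBasis hfr i
      rw [← hb_def, ← hev_def] at this
      exact this
    rw [h1, h2, real_inner_smul_left]
    ring
  have hexp2 : (inner ℝ g g : ℝ) = ∑ i, (inner ℝ g (b i) : ℝ) * (inner ℝ (b i) g : ℝ) :=
    (b.sum_inner_mul_inner g g).symm
  calc Eterm n β = (inner ℝ g (T g) : ℝ) := hgTg.symm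
  _ = ∑ i, ev i * ((inner ℝ g (b i) : ℝ) * (inner ℝ (b i) g : ℝ)) := hexp1
  _ ≤ ∑ i, lam₁ * ((inner ℝ g (b i) : ℝ) * (inner ℝ (b i) g : ℝ)) :=
      Finset.sum_le_sum (fun i _ => hbound i)
  _ = lam₁ * ∑ i, (inner ℝ g (b i) : ℝ) * (inner ℝ (b i) g : ℝ) := by rw [Finset.mul_sum]
  _ = lam₁ * varSum n β := by rw [← hexp2, hgg]

end CWP
end

open CurieWeiss in
/-- For the Curie-Weiss Glauber dynamics, the Dirichlet form of the sum of spins is at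
most `2`; if all pairs of spins are nonnegatively correlated under `μ_n`, then
`Var_{μ_n}(h) ≥ n` and consequently the spectral gap satisfies `1 - λ₁ ≤ 2/n`, where
`λ₁` is the largest eigenvalue of the dynamics different from `1`. -/
theorem sum_spins_dirichlet_and_gap (n : ℕ) (hn : 1 ≤ n) (β : ℝ) (hβ : 0 ≤ β) :
    dirichlet n β ≤ 2 ∧
    ((∀ i j : Fin n, 0 ≤ cov n β i j) →
      (n : ℝ) ≤ varSum n β ∧
      ∀ lam₁ : ℝ,
        Module.End.HasEigenvalue (Matrix.toLin' (Matrix.of (glauber n β))) lam₁ →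
        lam₁ ≠ 1 →
        (∀ θ : ℝ, Module.End.HasEigenvalue (Matrix.toLin' (Matrix.of (glauber n β))) θ →
          θ ≠ 1 → θ ≤ lam₁) →
        1 - lam₁ ≤ 2 / n) := by
  constructor
  · exact CWP.dirichlet_le_two n β hn
  · intro hcov
    refine ⟨CWP.varSum_ge n β hcov, ?_⟩
    intro lam₁ _ _ hmax
    have hE := CWP.Eterm_le n β hn lam₁ hmax
    have hD := CWP.dirichlet_le_two n β hn
    have hDE := CWP.dirichlet_eq n β hn
    have hV := CWP.varSum_ge n β hcov
    have hn' : (0:ℝ) < n := by exact_mod_cast hn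
    by_cases hl : 1 - lam₁ ≤ 0
    · have h0 : (0:ℝ) ≤ 2 / n := by positivity
      linarith
    · push_neg at hl
      have h1 : (1 - lam₁) * varSum n β ≤ 2 := by
        have e : (1 - lam₁) * varSum n β = varSum n β - lam₁ * varSum n β := by ring
        linarith
      have h2 : (1 - lam₁) * (n:ℝ) ≤ (1 - lam₁) * varSum n β :=
        mul_le_mul_of_nonneg_left hV hl.le
      rw [le_div_iff₀ hn']
      linarith
end
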